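/- arXiv:1808.09059 — 4 statements merged into one kernel-verified Lean document; each statement's English description precedes it below -/
import Mathlib

section
/- Let Γ = Y I_a be the stoichiometric matrix of a CRN, where Y is the complex matrix and I_a the incidence matrix. Then dim(ker(Y) ∩ im(I_a)) = n − ℓ − rank(Γ), where n is the number of complexes and ℓ is the number of connected components (linkage classes) of the reaction graph. -/
/-!
Rank–nullity for `Y` restricted to `im I_a` gives `dim (ker Y ∩ im I_a) = rank I_a - rank (Y I_a)`.
Moreover `rank I_a = n - dim ker I_aᵀ`, and `I_aᵀ x = 0` says exactly that `x` takes equal values at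
the two ends of every reaction. This is also the kernel of the Laplacian of the undirected reaction
graph, whose dimension is the number `ℓ` of connected components.
-/

open Matrix LinearMap Module

theorem Submodule.finrank_map_add_finrank_ker_inf {K V W : Type*} [DivisionRing K]
    [AddCommGroup V] [Module K V] [AddCommGroup W] [Module K W] [FiniteDimensional K V]
    (f : V →ₗ[K] W) (p : Submodule K V) :
    finrank K (p.map f) + finrank K ↥(ker f ⊓ p) = finrank K p := by
  have h := (f.domRestrict p).finrank_range_add_finrank_ker
  rwa [range_domRestrict, ker_domRestrict, ← Submodule.finrank_map_subtype_eq,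
    Submodule.map_comap_subtype, inf_comm] at h

theorem Matrix.rank_mul_add_finrank_ker_inf_range {K l m n : Type*} [Field K]
    [Fintype m] [Fintype n] (A : Matrix l m K) (B : Matrix m n K) :
    (A * B).rank + finrank K ↥(ker A.mulVecLin ⊓ range B.mulVecLin) = B.rank := by
  rw [Matrix.rank, mulVecLin_mul, range_comp]
  exact Submodule.finrank_map_add_finrank_ker_inf _ _

section Incidence

variable {V E : Type*} [Fintype V] [DecidableEq V]

variable (R : Type*) [Ring R] in
def incidenceMatrix (s p : E → V) : Matrix V E R :=
  of fun i k => (if i = p k then 1 else 0) - (if i = s k then 1 else 0)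

def underlyingGraph (s p : E → V) : SimpleGraph V :=
  SimpleGraph.fromRel fun i j => ∃ k, s k = i ∧ p k = j

variable (s p : E → V)

theorem incidenceMatrix_transpose_mulVec_apply {R : Type*} [Ring R] (x : V → R) (k : E) :
    ((incidenceMatrix R s p)ᵀ *ᵥ x) k = x (p k) - x (s k) := by
  simp [incidenceMatrix, mulVec, dotProduct, sub_mul, Finset.sum_sub_distrib]

theorem incidenceMatrix_transpose_mulVec_eq_zero_iff {R : Type*} [Ring R] (x : V → R) :
    (incidenceMatrix R s p)ᵀ *ᵥ x = 0 ↔ ∀ i j, (underlyingGraph s p).Adj i j → x i = x j := by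
  simp only [funext_iff, incidenceMatrix_transpose_mulVec_apply, Pi.zero_apply, sub_eq_zero,
    underlyingGraph, SimpleGraph.fromRel_adj]
  constructor
  · rintro h i j ⟨-, ⟨k, rfl, rfl⟩ | ⟨k, rfl, rfl⟩⟩
    exacts [(h k).symm, h k]
  · intro h k
    by_cases hk : s k = p k
    · rw [hk]
    · exact (h _ _ ⟨hk, Or.inl ⟨k, rfl, rfl⟩⟩).symm

theorem finrank_ker_incidenceMatrix_transpose [Fintype E] :
    finrank ℝ ↥(ker (incidenceMatrix ℝ s p)ᵀ.mulVecLin)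
      = Nat.card (underlyingGraph s p).ConnectedComponent := by
  classical
  have hker : ker (incidenceMatrix ℝ s p)ᵀ.mulVecLin
      = ker ((underlyingGraph s p).lapMatrix ℝ).toLin' := by
    ext x
    simp only [mem_ker, mulVecLin_apply, toLin'_apply,
      incidenceMatrix_transpose_mulVec_eq_zero_iff, SimpleGraph.lapMatrix_mulVec_eq_zero_iff_forall_adj]
  rw [hker, ← SimpleGraph.card_connectedComponent_eq_finrank_ker_toLin'_lapMatrix,
    Nat.card_eq_fintype_card]

theorem rank_incidenceMatrix_add_card_connectedComponent [Fintype E] :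
    (incidenceMatrix ℝ s p).rank + Nat.card (underlyingGraph s p).ConnectedComponent
      = Fintype.card V := by
  rw [← rank_transpose, ← finrank_ker_incidenceMatrix_transpose, Matrix.rank,
    finrank_range_add_finrank_ker, Module.finrank_fintype_fun_eq_card]

end Incidence

/-- **Deficiency formula** `δ = dim(ker Y ∩ im I_a) = n − ℓ − rank Γ`.
A CRN has `m` species, `n` complexes (columns of `Y`), and `r` reactions
`r_k : y_{s k} → y_{p k}`.  `I_a` is the incidence matrix of the reaction
graph, and `ℓ` is the number of connected components of the (undirected)
reaction graph. -/
theorem deficiency_eq_n_sub_l_sub_rank (m n r : ℕ)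
    (Y : Matrix (Fin m) (Fin n) ℝ) (s p : Fin r → Fin n)
    (Ia : Matrix (Fin n) (Fin r) ℝ)
    (hIa : ∀ i k, Ia i k = (if i = p k then (1 : ℝ) else 0) - (if i = s k then 1 else 0)) :
    Module.finrank ℝ ↥(LinearMap.ker Y.mulVecLin ⊓ LinearMap.range Ia.mulVecLin)
      = n - Nat.card (SimpleGraph.fromRel fun i j => ∃ k, s k = i ∧ p k = j).ConnectedComponent
        - (Y * Ia).rank := by
  obtain rfl : Ia = incidenceMatrix ℝ s p := Matrix.ext hIa
  have hdef := rank_mul_add_finrank_ker_inf_range Y (incidenceMatrix ℝ s p)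
  have hrank := rank_incidenceMatrix_add_card_connectedComponent s p
  rw [Fintype.card_fin] at hrank
  unfold underlyingGraph at hrank
  omega
end

section
/- A vector v ∈ R^r with nonnegative entries lies in the kernel of the incidence matrix I_a of a directed graph if and only if v is a nonnegative linear combination of indicator vectors of directed cycles of the graph. -/
/-- `w : Fin r → ℝ` is the indicator vector of a directed cycle of the directed
graph on `Fin n` whose edge `k` goes from vertex `s k` to vertex `p k`:
there is a sequence of distinct edges `c 0, c 1, ..., c l` forming a closed
directed walk, and `w` is `1` on these edges and `0` elsewhere. -/
def IsDirCycleIndicator {n r : ℕ} (s p : Fin r → Fin n) (w : Fin r → ℝ) : Prop :=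
  ∃ (l : ℕ) (c : Fin (l + 1) → Fin r), Function.Injective c ∧
    (∀ i, p (c i) = s (c (i + 1))) ∧ w = Set.indicator (Set.range c) 1

namespace DirCycleAux

open Finset Function

variable {n r : ℕ} (s p : Fin r → Fin n)

/-- The kernel condition written out entrywise. -/
def Ker (v : Fin r → ℝ) : Prop :=
  ∀ i : Fin n,
    ∑ k, ((if i = p k then (1 : ℝ) else 0) - (if i = s k then 1 else 0)) * v k = 0

lemma ker_indicator {l : ℕ} (c : Fin (l + 1) → Fin r) (hc : Function.Injective c)
    (hcl : ∀ i, p (c i) = s (c (i + 1))) :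
    Ker s p (Set.indicator (Set.range c) 1) := by
  intro i
  have h1 : ∀ k : Fin r, ((if i = p k then (1 : ℝ) else 0) - (if i = s k then 1 else 0)) *
      Set.indicator (Set.range c) 1 k
      = Set.indicator (Set.range c)
          (fun k => (if i = p k then (1 : ℝ) else 0) - (if i = s k then 1 else 0)) k := by
    intro k
    by_cases h : k ∈ Set.range c <;>
      simp [Set.indicator_of_mem, Set.indicator_of_notMem, h]
  rw [Finset.sum_congr rfl (fun k _ => h1 k)]
  rw [Finset.sum_indicator_eq_sum_filter]
  have himg : Finset.univ.filter (fun k => k ∈ Set.range c) = Finset.image c Finset.univ := by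
    ext k
    simp [Set.mem_range]
  rw [himg, Finset.sum_image (fun a _ b _ h => hc h)]
  rw [Finset.sum_sub_distrib]
  have hre : ∑ j : Fin (l + 1), (if i = s (c j) then (1 : ℝ) else 0)
      = ∑ j : Fin (l + 1), (if i = s (c (j + 1)) then (1 : ℝ) else 0) := by
    exact (Fintype.sum_equiv (Equiv.addRight (1 : Fin (l + 1))) _ _ (fun j => rfl)).symm
  rw [hre]
  have : ∀ j : Fin (l + 1), (if i = p (c j) then (1 : ℝ) else 0)
      = (if i = s (c (j + 1)) then (1 : ℝ) else 0) := by
    intro j; rw [hcl j]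
  rw [Finset.sum_congr rfl (fun j _ => this j), sub_self]

lemma exists_next (v : Fin r → ℝ) (hv : ∀ k, 0 ≤ v k) (hker : Ker s p v)
    {k : Fin r} (hk : 0 < v k) : ∃ k', s k' = p k ∧ 0 < v k' := by
  set i := p k with hi
  have h := hker i
  rw [Finset.sum_congr rfl (fun k' (_ : k' ∈ Finset.univ) => sub_mul _ _ (v k')),
    Finset.sum_sub_distrib, sub_eq_zero] at h
  have hL : v k ≤ ∑ k', (if i = p k' then (1 : ℝ) else 0) * v k' := by
    have hterm : v k = (if i = p k then (1 : ℝ) else 0) * v k := by simp [hi]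
    rw [hterm]
    apply Finset.single_le_sum (f := fun k' => (if i = p k' then (1 : ℝ) else 0) * v k')
    · intro k' _
      by_cases h : i = p k' <;> simp [h, hv k']
    · exact Finset.mem_univ k
  by_contra hcon
  push_neg at hcon
  have hz : ∀ k' : Fin r, (if i = s k' then (1 : ℝ) else 0) * v k' = 0 := by
    intro k'
    by_cases h : i = s k'
    · have := hcon k' h.symm
      have : v k' = 0 := le_antisymm this (hv k')
      simp [this]
    · simp [h]
  rw [Finset.sum_congr rfl (fun k' _ => hz k'), Finset.sum_const_zero] at h
  have : (0 : ℝ) < 0 := lt_of_lt_of_le (lt_of_lt_of_le hk hL) h.le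
  exact lt_irrefl 0 this

/-- If a nonnegative kernel vector is positive somewhere, its support contains a
directed cycle. -/
lemma exists_cycle (v : Fin r → ℝ) (hv : ∀ k, 0 ≤ v k) (hker : Ker s p v)
    {k0 : Fin r} (hk0 : 0 < v k0) :
    ∃ (l : ℕ) (c : Fin (l + 1) → Fin r), Function.Injective c ∧
      (∀ i, p (c i) = s (c (i + 1))) ∧ (∀ i, 0 < v (c i)) := by
  classical
  -- successor edge function
  set next : Fin r → Fin r := fun k =>
    if h : 0 < v k then (exists_next s p v hv hker h).choose else k with hnext
  have hnextspec : ∀ k, 0 < v k → s (next k) = p k ∧ 0 < v (next k) := by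
    intro k hk
    have := (exists_next s p v hv hker hk).choose_spec
    simpa [hnext, dif_pos hk] using this
  have hiter : ∀ m, 0 < v (next^[m] k0) := by
    intro m
    induction m with
    | zero => simpa using hk0
    | succ m ih =>
      rw [Function.iterate_succ_apply']
      exact (hnextspec _ ih).2
  -- pigeonhole: the iterates repeat
  obtain ⟨a, b, hab, heq⟩ := Finite.exists_ne_map_eq_of_infinite (fun m : ℕ => next^[m] k0)
  -- WLOG a < b
  wlog h : a < b generalizing a b
  · exact this b a hab.symm heq.symm (hab.lt_or_gt.resolve_left h)
  set m := next^[a] k0 with hm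
  have hper : Function.IsPeriodicPt next (b - a) m := by
    show next^[b - a] m = m
    rw [hm, ← Function.iterate_add_apply, Nat.sub_add_cancel h.le]
    exact heq.symm
  set d := Function.minimalPeriod next m with hd
  have hdpos : 0 < d := hper.minimalPeriod_pos (Nat.sub_pos_of_lt h)
  have hvm : ∀ j, 0 < v (next^[j] m) := by
    intro j
    rw [hm, ← Function.iterate_add_apply]
    exact hiter _
  have hd1 : d - 1 + 1 = d := Nat.succ_pred_eq_of_pos hdpos
  have hstep : ∀ i : Fin (d - 1 + 1),
      next^[((i + 1 : Fin (d - 1 + 1)) : ℕ)] m = next (next^[(i : ℕ)] m) := by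
    intro i
    rcases eq_or_ne i (Fin.last (d - 1)) with hi | hi
    · have h1 : ((i + 1 : Fin (d - 1 + 1)) : ℕ) = 0 := by
        subst hi; simp
      have h2 : (i : ℕ) = d - 1 := by subst hi; rfl
      rw [h1, h2, ← Function.iterate_succ_apply' next (d - 1) m,
        Nat.succ_eq_add_one, hd1]
      rw [Function.iterate_zero_apply, hd]
      exact (Function.iterate_minimalPeriod).symm
    · have h1 : ((i + 1 : Fin (d - 1 + 1)) : ℕ) = (i : ℕ) + 1 := by
        rw [Fin.val_add_one]
        simp [hi]
      rw [h1, Function.iterate_succ_apply']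
  refine ⟨d - 1, fun i => next^[i.val] m, ?_, ?_, ?_⟩
  · -- injectivity
    intro i j hij
    have hi : (i : ℕ) ∈ Set.Iio d := by
      have := i.isLt; simp only [Set.mem_Iio]; omega
    have hj : (j : ℕ) ∈ Set.Iio d := by
      have := j.isLt; simp only [Set.mem_Iio]; omega
    exact Fin.ext (Function.iterate_injOn_Iio_minimalPeriod hi hj hij)
  · intro i
    show p (next^[(i : ℕ)] m) = s (next^[((i + 1 : Fin (d - 1 + 1)) : ℕ)] m)
    rw [hstep i, (hnextspec _ (hvm (i : ℕ))).1]
  · intro i; exact hvm _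

/-- Flow decomposition, by strong induction on the support size. -/
lemma decomp : ∀ (m : ℕ) (v : Fin r → ℝ),
    (Finset.univ.filter (fun k => v k ≠ 0)).card ≤ m →
    (∀ k, 0 ≤ v k) → Ker s p v →
    ∃ (N : ℕ) (lam : Fin N → ℝ) (w : Fin N → Fin r → ℝ),
      (∀ t, 0 ≤ lam t) ∧ (∀ t, IsDirCycleIndicator s p (w t)) ∧
      v = ∑ t, lam t • w t := by
  intro m
  induction m with
  | zero =>
    intro v hcard hv hker
    have hz : ∀ k, v k = 0 := by
      intro k
      by_contra hk
      have : k ∈ Finset.univ.filter (fun k => v k ≠ 0) := by simp [hk]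
      have := Finset.card_pos.mpr ⟨k, this⟩
      omega
    refine ⟨0, Fin.elim0, Fin.elim0, fun t => t.elim0, fun t => t.elim0, ?_⟩
    funext k
    simp [hz k]
  | succ m ih =>
    intro v hcard hv hker
    by_cases h0 : ∀ k, v k = 0
    · refine ⟨0, Fin.elim0, Fin.elim0, fun t => t.elim0, fun t => t.elim0, ?_⟩
      funext k
      simp [h0 k]
    · push_neg at h0
      obtain ⟨k0, hk0⟩ := h0
      have hk0' : 0 < v k0 := lt_of_le_of_ne (hv k0) (Ne.symm hk0)
      obtain ⟨l, c, hcinj, hcl, hcpos⟩ := exists_cycle s p v hv hker hk0'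
      have hne : (Finset.univ : Finset (Fin (l + 1))).Nonempty := ⟨0, Finset.mem_univ 0⟩
      set ε := Finset.univ.inf' hne (fun i => v (c i)) with hε
      have hεpos : 0 < ε := by
        rw [hε, Finset.lt_inf'_iff]
        intro i _; exact hcpos i
      obtain ⟨i0, _, hi0⟩ := Finset.exists_mem_eq_inf' hne (fun i => v (c i))
      set w0 : Fin r → ℝ := Set.indicator (Set.range c) 1 with hw0
      have hw0k : ∀ k, w0 k = if k ∈ Set.range c then 1 else 0 := by
        intro k; rw [hw0, Set.indicator_apply]; split <;> rfl
      have hεle : ∀ i : Fin (l + 1), ε ≤ v (c i) := by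
        intro i
        rw [hε]
        exact Finset.inf'_le _ (Finset.mem_univ i)
      set v' : Fin r → ℝ := fun k => v k - ε * w0 k with hv'
      have hv'nonneg : ∀ k, 0 ≤ v' k := by
        intro k
        simp only [hv']
        rw [hw0k]
        by_cases h : k ∈ Set.range c
        · obtain ⟨i, rfl⟩ := h
          rw [if_pos (Set.mem_range_self i), mul_one]
          linarith [hεle i]
        · simp [h, hv k]
      have hker' : Ker s p v' := by
        intro i
        have h1 := hker i
        have h2 := ker_indicator s p c hcinj hcl i
        rw [← hw0] at h2
        have : ∀ k : Fin r,
            ((if i = p k then (1 : ℝ) else 0) - (if i = s k then 1 else 0)) * v' k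
            = ((if i = p k then (1 : ℝ) else 0) - (if i = s k then 1 else 0)) * v k
              - ε * (((if i = p k then (1 : ℝ) else 0) - (if i = s k then 1 else 0)) * w0 k) := by
          intro k; simp only [hv']; ring
        rw [Finset.sum_congr rfl (fun k _ => this k), Finset.sum_sub_distrib,
          ← Finset.mul_sum, h1, h2, mul_zero, sub_zero]
      have hsupp : Finset.univ.filter (fun k => v' k ≠ 0) ⊆
          (Finset.univ.filter (fun k => v k ≠ 0)).erase (c i0) := by
        intro k hk
        simp only [Finset.mem_filter, Finset.mem_univ, true_and] at hk
        rw [Finset.mem_erase]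
        constructor
        · rintro rfl
          apply hk
          simp only [hv']
          rw [hw0k, if_pos ⟨i0, rfl⟩, mul_one, ← hi0]
          ring
        · simp only [Finset.mem_filter, Finset.mem_univ, true_and]
          intro hkz
          apply hk
          have hknotin : k ∉ Set.range c := by
            rintro ⟨i, rfl⟩
            exact (hcpos i).ne' hkz
          simp only [hv']
          rw [hw0k, if_neg hknotin, mul_zero, hkz, sub_zero]
      have hmem : c i0 ∈ Finset.univ.filter (fun k => v k ≠ 0) := by
        simp only [Finset.mem_filter, Finset.mem_univ, true_and]
        exact (hcpos i0).ne'
      have hcard' : (Finset.univ.filter (fun k => v' k ≠ 0)).card ≤ m := by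
        have h1 := Finset.card_le_card hsupp
        rw [Finset.card_erase_of_mem hmem] at h1
        omega
      obtain ⟨N, lam, w, hlam, hw, hsum⟩ := ih v' hcard' hv'nonneg hker'
      refine ⟨N + 1, Fin.cons ε lam, Fin.cons w0 w, ?_, ?_, ?_⟩
      · intro t
        refine Fin.cases ?_ ?_ t
        · simpa using hεpos.le
        · intro j; simpa using hlam j
      · intro t
        refine Fin.cases ?_ ?_ t
        · exact ⟨l, c, hcinj, hcl, by simp [hw0]⟩
        · intro j; simpa using hw j
      · funext k
        have hk := congrFun hsum k
        simp only [hv', Finset.sum_apply, Pi.smul_apply, smul_eq_mul] at hk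
        simp only [Finset.sum_apply, Pi.smul_apply, smul_eq_mul, Fin.sum_univ_succ,
          Fin.cons_zero, Fin.cons_succ]
        linarith [hk]

end DirCycleAux

/-- **Kernel of the incidence matrix and directed cycles.**
A nonnegative vector `v ∈ ℝ^r` lies in the kernel of the incidence matrix of a
directed graph iff it is a nonnegative linear combination of indicator vectors
of directed cycles of the graph. -/
theorem nonneg_ker_incidence_iff_nonneg_comb_of_cycles (n r : ℕ)
    (s p : Fin r → Fin n) (Ia : Matrix (Fin n) (Fin r) ℝ)
    (hIa : ∀ i k, Ia i k = (if i = p k then (1 : ℝ) else 0) - (if i = s k then 1 else 0))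
    (v : Fin r → ℝ) (hv : ∀ k, 0 ≤ v k) :
    Ia.mulVec v = 0 ↔
      ∃ (N : ℕ) (lam : Fin N → ℝ) (w : Fin N → Fin r → ℝ),
        (∀ t, 0 ≤ lam t) ∧ (∀ t, IsDirCycleIndicator s p (w t)) ∧
        v = ∑ t, lam t • w t := by
  classical
  constructor
  · intro h
    have hker : DirCycleAux.Ker s p v := by
      intro i
      have h0 := congrFun h i
      simp only [Matrix.mulVec, dotProduct, Pi.zero_apply] at h0
      calc ∑ k, ((if i = p k then (1 : ℝ) else 0) - (if i = s k then 1 else 0)) * v k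
          = ∑ k, Ia i k * v k := Finset.sum_congr rfl fun k _ => by rw [hIa]
        _ = 0 := h0
    exact DirCycleAux.decomp s p _ v le_rfl hv hker
  · rintro ⟨N, lam, w, hlam, hw, rfl⟩
    have hker : ∀ t, Ia.mulVec (w t) = 0 := by
      intro t
      obtain ⟨l, c, hcinj, hcl, hwt⟩ := hw t
      funext i
      have h1 := DirCycleAux.ker_indicator s p c hcinj hcl i
      rw [hwt]
      simp only [Matrix.mulVec, dotProduct, Pi.zero_apply]
      calc ∑ k, Ia i k * Set.indicator (Set.range c) 1 k
          = ∑ k, ((if i = p k then (1 : ℝ) else 0) - (if i = s k then 1 else 0)) *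
              Set.indicator (Set.range c) 1 k :=
            Finset.sum_congr rfl fun k _ => by rw [hIa]
        _ = 0 := h1
    have hlin : Ia.mulVec (∑ t, lam t • w t) = ∑ t, lam t • Ia.mulVec (w t) := by
      simp only [← Matrix.mulVecLin_apply, map_sum, map_smul]
    rw [hlin]
    simp [hker]
end

section
/- Let G^R = (V,E) be a reaction-to-reaction graph on reactions r_1,...,r_r of a CRN such that every edge of G^R belongs to a minimal directed cycle, and every minimal directed cycle {r_{μ(1)},...,r_{μ(l)}} (with edges (r_{μ(i)}, r_{μ(i+1 mod l)})) corresponds to an elementary flux mode, meaning Σ_{i=1}^l (y_{p(μ(i))} − y_{s(μ(i))}) = 0. Then the linear system α_i − α_j = y_{s(j)} − y_{p(i)} for all edges (r_i,r_j) ∈ E, in unknowns α_1,...,α_r ∈ R^m, is consistent, provided the edge set of G^R is a disjoint union of edge sets of such minimal directed cycles. -/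
/-!
With `w i j := src j - prod i`, the elementary flux mode hypothesis says, after shifting the
source terms one step along the cycle, that `w` sums to zero around every simple directed cycle.
Any walk can then be shortened to a simple path of the same weight: prepending an edge `a → b` to
a simple path from `b` that passes through `a` closes a simple cycle, whose weight vanishes. So
every closed walk has weight zero. Since every edge lies on a cycle, reachability is symmetric;
setting `α i` to the weight of a walk from `i` to a fixed vertex of its strongly connected
component is then well defined, and along an edge `i → j` it satisfies `α i = w i j + α j`.
-/

open Relation

section Walks

variable {σ V : Type*} [AddCommGroup V] {E : σ → σ → Prop} {w : σ → σ → V}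

def walkWeight (w : σ → σ → V) : List σ → V
  | a :: b :: l => w a b + walkWeight w (b :: l)
  | _ => 0

theorem walkWeight_append_cons (p q : List σ) (x : σ) :
    walkWeight w (p ++ x :: q) = walkWeight w (p ++ [x]) + walkWeight w (x :: q) := by
  match p with
  | [] => simp [walkWeight]
  | [a] => simp [walkWeight]
  | a :: b :: p =>
    have ih := walkWeight_append_cons (b :: p) q x
    simp only [List.cons_append, walkWeight] at ih ⊢
    rw [ih, add_assoc]

theorem walkWeight_ofFn {n : ℕ} (d : Fin (n + 1) → σ) :
    walkWeight w (List.ofFn d) = ∑ i : Fin n, w (d i.castSucc) (d i.succ) := by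
  induction n with
  | zero => simp [walkWeight]
  | succ n ih =>
    have h := ih (fun i => d i.succ)
    rw [List.ofFn_succ] at h
    rw [List.ofFn_succ, List.ofFn_succ, walkWeight, h, Fin.sum_univ_succ]
    rfl

theorem Fin.snoc_zero_succ {n : ℕ} (c : Fin (n + 1) → σ) (i : Fin (n + 1)) :
    (Fin.snoc c (c 0) : Fin (n + 2) → σ) i.succ = c (i + 1) := by
  induction i using Fin.lastCases with
  | last => rw [Fin.succ_last, Fin.snoc_last, Fin.last_add_one]
  | cast j => rw [Fin.succ_castSucc, Fin.snoc_castSucc, Fin.coeSucc_eq_succ]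

theorem List.ofFn_append_zero {n : ℕ} (c : Fin (n + 1) → σ) :
    List.ofFn c ++ [c 0] = List.ofFn (Fin.snoc c (c 0) : Fin (n + 2) → σ) := by
  rw [List.ofFn_succ' (n := n + 1)]
  simp only [Fin.snoc_castSucc, Fin.snoc_last, List.concat_eq_append]

theorem walkWeight_ofFn_append_zero {n : ℕ} (c : Fin (n + 1) → σ) :
    walkWeight w (List.ofFn c ++ [c 0]) = ∑ a, w (c a) (c (a + 1)) := by
  rw [List.ofFn_append_zero, walkWeight_ofFn]
  simp only [Fin.snoc_castSucc, Fin.snoc_zero_succ]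

theorem rel_of_isChain_ofFn_append_zero {n : ℕ} {c : Fin (n + 1) → σ}
    (h : (List.ofFn c ++ [c 0]).IsChain E) (a : Fin (n + 1)) : E (c a) (c (a + 1)) := by
  rw [List.ofFn_append_zero, List.isChain_ofFn] at h
  let d : Fin (n + 2) → σ := Fin.snoc c (c 0)
  have ha : E (d a.castSucc) (d a.succ) := h a (by omega)
  simpa only [d, Fin.snoc_castSucc, Fin.snoc_zero_succ] using ha

variable (E w) in
def SimpleCycleSumsVanish : Prop :=
  ∀ (n : ℕ) (c : Fin (n + 1) → σ), Function.Injective c → (∀ a, E (c a) (c (a + 1))) →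
    ∑ a, w (c a) (c (a + 1)) = 0

theorem SimpleCycleSumsVanish.walkWeight_eq_zero (hcyc : SimpleCycleSumsVanish E w) {x : σ}
    {l : List σ} (hnd : (x :: l).Nodup) (hE : (x :: l ++ [x]).IsChain E) :
    walkWeight w (x :: l ++ [x]) = 0 := by
  set c : Fin (l.length + 1) → σ := (x :: l).get
  have hc : List.ofFn c ++ [c 0] = x :: l ++ [x] := by rw [List.ofFn_get]; rfl
  rw [← hc] at hE ⊢
  rw [walkWeight_ofFn_append_zero]
  exact hcyc _ c (List.nodup_iff_injective_get.1 hnd) (rel_of_isChain_ofFn_append_zero hE)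

variable (E w) in
inductive IsWalkWeight : σ → σ → V → Prop
  | nil (a : σ) : IsWalkWeight a a 0
  | cons {a b c : σ} {v : V} : E a b → IsWalkWeight b c v → IsWalkWeight a c (w a b + v)

namespace IsWalkWeight

theorem trans {a b c : σ} {u v : V} (h₁ : IsWalkWeight E w a b u)
    (h₂ : IsWalkWeight E w b c v) : IsWalkWeight E w a c (u + v) := by
  induction h₁ with
  | nil => simpa using h₂
  | cons hab _ ih => simpa [add_assoc] using cons hab (ih h₂)

theorem exists_of_reflTransGen {a b : σ} (h : ReflTransGen E a b) :
    ∃ v, IsWalkWeight E w a b v := by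
  induction h using ReflTransGen.head_induction_on with
  | refl => exact ⟨0, nil b⟩
  | head hac _ ih =>
    obtain ⟨v, hv⟩ := ih
    exact ⟨_, cons hac hv⟩

theorem exists_nodup_walk (hcyc : SimpleCycleSumsVanish E w) {a c : σ} {v : V}
    (h : IsWalkWeight E w a c v) :
    ∃ l, (a :: l).Nodup ∧ (a :: l).IsChain E ∧ (a :: l).getLast (List.cons_ne_nil a l) = c ∧
      walkWeight w (a :: l) = v := by
  induction h with
  | nil a => exact ⟨[], List.nodup_singleton a, .singleton a, rfl, rfl⟩
  | @cons a b c v hab _ ih =>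
    obtain ⟨l, hnd, hE, hlast, rfl⟩ := ih
    by_cases ha : a ∈ b :: l
    · obtain ⟨p, q, hpq⟩ := List.append_of_mem ha
      have hE' : (a :: (p ++ a :: q)).IsChain E := hpq ▸ hE.cons_cons hab
      rw [hpq] at hnd hE
      simp only [hpq] at hlast
      have hcycle : walkWeight w (a :: p ++ [a]) = 0 :=
        hcyc.walkWeight_eq_zero ((List.nodup_middle.1 hnd).sublist (by simp))
          (List.isChain_cons_split.1 hE').1
      refine ⟨q, hnd.sublist (List.sublist_append_right p _), (List.isChain_split.1 hE).2,
        ?_, ?_⟩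
      · rwa [List.getLast_append_of_ne_nil _ (List.cons_ne_nil a q)] at hlast
      · rw [show w a b + walkWeight w (b :: l) = walkWeight w (a :: b :: l) from rfl, hpq,
          ← List.cons_append, walkWeight_append_cons, hcycle, zero_add]
    · exact ⟨b :: l, List.nodup_cons.2 ⟨ha, hnd⟩, hE.cons_cons hab,
        by rwa [List.getLast_cons_cons], rfl⟩

theorem eq_zero (hcyc : SimpleCycleSumsVanish E w) {a : σ} {v : V}
    (h : IsWalkWeight E w a a v) : v = 0 := by
  obtain ⟨l, hnd, -, hlast, rfl⟩ := h.exists_nodup_walk hcyc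
  cases l with
  | nil => rfl
  | cons b l =>
    rw [List.getLast_cons_cons] at hlast
    exact absurd (hlast ▸ List.getLast_mem _) (List.nodup_cons.1 hnd).1

theorem eq_of_reflTransGen (hcyc : SimpleCycleSumsVanish E w) {a b : σ} {u u' : V}
    (h : IsWalkWeight E w a b u) (h' : IsWalkWeight E w a b u') (hba : ReflTransGen E b a) :
    u = u' := by
  obtain ⟨v, hv⟩ := exists_of_reflTransGen (w := w) hba
  have h₀ : u + v = 0 := (h.trans hv).eq_zero hcyc
  have h₀' : u' + v = 0 := (h'.trans hv).eq_zero hcyc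
  exact add_right_cancel (h₀.trans h₀'.symm)

end IsWalkWeight

theorem exists_sub_eq_of_simpleCycleSumsVanish (hrev : ∀ i j, E i j → ReflTransGen E j i)
    (hcyc : SimpleCycleSumsVanish E w) : ∃ α : σ → V, ∀ i j, E i j → α i - α j = w i j := by
  have hsymm : ∀ {i j}, ReflTransGen E i j → ReflTransGen E j i := fun h =>
    ReflTransGen.lift' id (fun a b hab => hrev b a hab) _ _ (reflTransGen_swap.2 h)
  let S : Setoid σ := ⟨ReflTransGen E, ⟨fun _ => .refl, hsymm, .trans⟩⟩
  have hroot (i : σ) : ReflTransGen E i (Quotient.mk S i).out := hsymm (Quotient.mk_out i)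
  choose α hα using fun i => IsWalkWeight.exists_of_reflTransGen (w := w) (hroot i)
  refine ⟨α, fun i j hij => ?_⟩
  have hq : Quotient.mk S i = Quotient.mk S j := Quotient.sound (ReflTransGen.single hij)
  have hj : IsWalkWeight E w i (Quotient.mk S i).out (w i j + α j) := hq ▸ .cons hij (hα j)
  rw [(hα i).eq_of_reflTransGen hcyc hj (Quotient.mk_out i), add_sub_cancel_right]

theorem reflTransGen_of_cycle {n : ℕ} {c : Fin (n + 1) → σ} (hc : ∀ a, E (c a) (c (a + 1)))
    (a b : Fin (n + 1)) : ReflTransGen E (c a) (c b) := by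
  have from_zero (d : Fin (n + 1) → σ) (hd : ∀ a, E (d a) (d (a + 1))) (b : Fin (n + 1)) :
      ReflTransGen E (d 0) (d b) := by
    induction b using Fin.induction with
    | zero => rfl
    | succ b ih => exact ih.tail (Fin.coeSucc_eq_succ ▸ hd b.castSucc)
  simpa using from_zero (fun x => c (x + a))
    (fun x => by simpa only [add_right_comm] using hc (x + a)) (b - a)

theorem simpleCycleSumsVanish_of_vertex_sums {f g : σ → V}
    (h : ∀ (n : ℕ) (c : Fin (n + 1) → σ), Function.Injective c → (∀ a, E (c a) (c (a + 1))) →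
      ∑ a, (g (c a) - f (c a)) = 0) :
    SimpleCycleSumsVanish E (fun i j => f j - g i) := by
  intro n c hinj hc
  have hshift : ∑ a, f (c (a + 1)) = ∑ a, f (c a) := Equiv.sum_comp (Equiv.addRight 1) (f ∘ c)
  have hsum := h n c hinj hc
  simp only [Finset.sum_sub_distrib] at hsum ⊢
  rw [hshift, ← neg_sub, hsum, neg_zero]

end Walks

theorem translation_system_consistent_general (m r : ℕ)
    (src prod : Fin r → Fin m → ℝ) (E : Fin r → Fin r → Prop)
    (hedge : ∀ i j, E i j → ∃ (l : ℕ) (c : Fin (l + 1) → Fin r),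
      Function.Injective c ∧ (∀ a, E (c a) (c (a + 1))) ∧
      ∃ a, c a = i ∧ c (a + 1) = j)
    (hEFM : ∀ (l : ℕ) (c : Fin (l + 1) → Fin r), Function.Injective c →
      (∀ a, E (c a) (c (a + 1))) → ∑ a, (prod (c a) - src (c a)) = 0) :
    ∃ α : Fin r → Fin m → ℝ, ∀ i j, E i j → α i - α j = src j - prod i := by
  have hrev : ∀ i j, E i j → ReflTransGen E j i := by
    intro i j hij
    obtain ⟨l, c, -, hc, a, rfl, rfl⟩ := hedge i j hij
    exact reflTransGen_of_cycle hc _ _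
  exact exists_sub_eq_of_simpleCycleSumsVanish hrev (simpleCycleSumsVanish_of_vertex_sums hEFM)

/-- **Consistency of the translation-complex linear system.**
`E` is the edge relation of a reaction-to-reaction graph on the reactions
`r_1, ..., r_r` (each with source complex `src k` and product complex
`prod k` in `ℝ^m`).  Assume: every edge belongs to a minimal directed cycle;
every minimal directed cycle `{r_{c 0}, ..., r_{c l}}` (with edges
`(r_{c i}, r_{c (i+1 mod l)})`) corresponds to an elementary flux mode, i.e.
`Σ_i (prod (c i) − src (c i)) = 0`; and the edge set of the graph is a
disjoint union of edge sets of such minimal directed cycles.  Then the linear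
system `α_i − α_j = src j − prod i` over all edges `(r_i, r_j)` is
consistent. -/
theorem translation_system_consistent (m r : ℕ)
    (src prod : Fin r → Fin m → ℝ) (E : Fin r → Fin r → Prop)
    (hedge : ∀ i j, E i j → ∃ (l : ℕ) (c : Fin (l + 1) → Fin r),
      Function.Injective c ∧ (∀ a, E (c a) (c (a + 1))) ∧
      ∃ a, c a = i ∧ c (a + 1) = j)
    (hEFM : ∀ (l : ℕ) (c : Fin (l + 1) → Fin r), Function.Injective c →
      (∀ a, E (c a) (c (a + 1))) → ∑ a, (prod (c a) - src (c a)) = 0)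
    (hdisj : ∃ (N : ℕ) (l : Fin N → ℕ) (c : (t : Fin N) → Fin (l t + 1) → Fin r),
      (∀ t, Function.Injective (c t)) ∧
      (∀ i j, E i j ↔ ∃ t a, c t a = i ∧ c t (a + 1) = j) ∧
      (∀ t₁ t₂ a₁ a₂, c t₁ a₁ = c t₂ a₂ → c t₁ (a₁ + 1) = c t₂ (a₂ + 1) → t₁ = t₂)) :
    ∃ α : Fin r → Fin m → ℝ, ∀ i j, E i j → α i - α j = src j - prod i :=
  translation_system_consistent_general m r src prod E hedge hEFM
end

section
/- Suppose the linear system α_i − α_j = y_{s(j)} − y_{p(i)}, for edges (r_i,r_j) of a reaction-to-reaction graph G^R, has a solution (α_1,...,α_r). Define a new CRN with reactions r'_k : y_{s(k)} + α_k → y_{p(k)} + α_k. Then this new CRN is a structural translation of the original (Γ' = Γ), and it is PS-compatible with G^R: for every edge (r_i,r_j) of G^R, the product complex of r'_i equals the source complex of r'_j. -/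
/-- **A solution of the translation system yields a PS-compatible structural
translation.**  Given reactions `r_k : src k → prod k` and a solution
`α_1, ..., α_r` of the system `α_i − α_j = src j − prod i` over the edges of a
reaction-to-reaction graph `E`, the translated CRN with reactions
`r'_k : src k + α k → prod k + α k` has the same stoichiometric matrix
(`Γ' = Γ`, columnwise) and for every edge `(r_i, r_j)` the product complex of
`r'_i` equals the source complex of `r'_j`. -/
theorem translated_network_is_structural_translation_and_ps (m r : ℕ)
    (src prod : Fin r → Fin m → ℝ) (E : Fin r → Fin r → Prop)
    (α : Fin r → Fin m → ℝ)
    (hα : ∀ i j, E i j → α i - α j = src j - prod i) :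
    (∀ k, (prod k + α k) - (src k + α k) = prod k - src k) ∧
    (∀ i j, E i j → prod i + α i = src j + α j) :=
  ⟨fun k => add_sub_add_right_eq_sub (prod k) (src k) (α k),
    fun i j hij => (add_comm _ _).trans (sub_eq_sub_iff_add_eq_add.mp (hα i j hij))⟩
end
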